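/- Every improving component contains a full improving component. Precisely: let (G,c,R) be a Steiner tree instance and K a component connecting terminal set X with c(K) < drop_G(X). Decompose K into its maximal full components K_1,…,K_k connecting terminal sets X_1,…,X_k. Then there exists i with c(K_i) < drop_G(X_i). -/

import Mathlib

/-!
Let `c_t(A)` be the number of components of the graph on the terminals joining the pairs at
distance at most `t`, together with the edges of `A`. Kruskal's algorithm gives the layer-cake
formula `TMST = ∫₀^∞ (c_t(⊥) - 1) dt`, and contracting `X` amounts to taking for `A` the clique
on `X`, so `drop(X) = ∫₀^∞ (c_t(⊥) - c_t(clique X)) dt`. Component counts are submodular,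
`c(A) + c(B) ≤ c(⊥) + c(A ⊔ B)`, and antitone in the reachability of `A`; as the cliques on the
`X_i` together connect `X`, this gives `drop(X) ≤ ∑ drop(X_i)`. If no `K_i` were improving, then
`c(K) = ∑ c(K_i) ≥ ∑ drop(X_i) ≥ drop(X)`.
-/

/-- The minimum cost of a spanning tree of the complete graph on `R`
with respect to the edge costs `u`. -/
noncomputable def mstCost {R : Type*} (u : Sym2 R → ℝ) : ℝ :=
  sInf {w : ℝ | ∃ T : Finset (Sym2 R), (∀ e ∈ T, ¬ e.IsDiag) ∧
    (SimpleGraph.fromEdgeSet (↑T : Set (Sym2 R))).Connected ∧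
    T.card + 1 = Nat.card R ∧ w = ∑ e ∈ T, u e}
/-- Shortest-path distance in the weighted graph `(G, c)`, as a function on unordered pairs. -/
noncomputable def wdist {V : Type*} (G : SimpleGraph V) (c : Sym2 V → ℝ) : Sym2 V → ℝ :=
  Sym2.lift ⟨fun x y => sInf {d : ℝ |
      (∃ p : G.Walk x y, d = (p.edges.map c).sum) ∨
      (∃ p : G.Walk y x, d = (p.edges.map c).sum)},
    fun x y => congrArg sInf (Set.ext fun _ => or_comm)⟩

/-- The metric closure of `(G, c)` restricted to a terminal set `R`. -/
noncomputable def restrictDist {V : Type*} (G : SimpleGraph V) (c : Sym2 V → ℝ)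
    (R : Finset V) : Sym2 {v : V // v ∈ R} → ℝ :=
  Sym2.lift ⟨fun a b => wdist G c s((a : V), (b : V)), fun a b => by show wdist G c s((a : V), (b : V)) = wdist G c s((b : V), (a : V)); rw [Sym2.eq_swap]⟩
/-- The setoid on `R` identifying all elements of `X` (and nothing else). -/
def contractSetoid {R : Type*} (X : Set R) : Setoid R where
  r a b := a = b ∨ (a ∈ X ∧ b ∈ X)
  iseqv := ⟨fun _ => Or.inl rfl,
    fun h => h.elim (fun e => Or.inl e.symm) (fun h' => Or.inr ⟨h'.2, h'.1⟩),
    fun h1 h2 => by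
      rcases h1 with rfl | ⟨ha, hb⟩
      · exact h2
      · rcases h2 with rfl | ⟨_, hc⟩
        · exact Or.inr ⟨ha, hb⟩
        · exact Or.inr ⟨ha, hc⟩⟩

/-- Edge costs on the quotient of `R` by a setoid `sd`: the minimum of `d`
over all pairs of representatives. -/
noncomputable def quotCost {R : Type*} (d : Sym2 R → ℝ) (sd : Setoid R) :
    Sym2 (Quotient sd) → ℝ :=
  fun e => sInf {v : ℝ | ∃ a b : R,
    s(Quotient.mk sd a, Quotient.mk sd b) = e ∧ v = d s(a, b)}

/-- `drop(X) = TMST - TMST_{/X}` for the terminal metric `d`. -/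
noncomputable def dropCost {R : Type*} (d : Sym2 R → ℝ) (X : Set R) : ℝ :=
  mstCost d - mstCost (quotCost d (contractSetoid X))
/-- The edge set `K` connects the vertex set `X`: all of `X` lies in a single
connected component of the graph with edge set `K`. -/
def ConnectsSet {V : Type*} (K : Set (Sym2 V)) (X : Set V) : Prop :=
  ∀ x ∈ X, ∀ y ∈ X, (SimpleGraph.fromEdgeSet K).Reachable x y

/-- The minimum cost of a component (edge set of `G`) connecting the vertex set `X`. -/
noncomputable def connCost {V : Type*} (G : SimpleGraph V) (c : Sym2 V → ℝ)
    (X : Set V) : ℝ :=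
  sInf {w : ℝ | ∃ K : Finset (Sym2 V), (↑K : Set (Sym2 V)) ⊆ G.edgeSet ∧
    ConnectsSet (↑K : Set (Sym2 V)) X ∧ w = ∑ e ∈ K, c e}
/-- `K` is a full component of `(G, R)`: an edge set of `G` forming a tree
whose leaves are exactly the terminals among its vertices (internal vertices
are Steiner vertices). -/
def IsFullComponent {V : Type*} (G : SimpleGraph V) (R : Finset V)
    (K : Finset (Sym2 V)) : Prop :=
  (↑K : Set (Sym2 V)) ⊆ G.edgeSet ∧
  (∀ x y : V, (∃ e ∈ K, x ∈ e) → (∃ e ∈ K, y ∈ e) →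
    (SimpleGraph.fromEdgeSet (↑K : Set (Sym2 V))).Reachable x y) ∧
  K.card + 1 = Set.ncard {v : V | ∃ e ∈ K, v ∈ e} ∧
  (∀ v : V, (∃ e ∈ K, v ∈ e) →
    (v ∈ R ↔ Set.ncard {e : Sym2 V | e ∈ K ∧ v ∈ e} = 1))

open Finset

namespace SimpleGraph

variable {V : Type*}

noncomputable def numComponents (G : SimpleGraph V) : ℕ := Nat.card G.ConnectedComponent

lemma numComponents_congr {G G' : SimpleGraph V} (h : G.Reachable = G'.Reachable) :
    G.numComponents = G'.numComponents := by
  simp only [numComponents, ConnectedComponent, h]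

lemma numComponents_anti [Finite V] {G G' : SimpleGraph V} (h : G ≤ G') :
    G'.numComponents ≤ G.numComponents :=
  ConnectedComponent.card_le_card_of_le h

lemma numComponents_bot : (⊥ : SimpleGraph V).numComponents = Nat.card V :=
  Nat.card_congr ⟨ConnectedComponent.lift id fun _ _ p _ => reachable_bot.mp ⟨p⟩,
    connectedComponentMk ⊥, fun c => c.ind fun _ => rfl, fun _ => rfl⟩

lemma Connected.numComponents_eq_one {G : SimpleGraph V} (h : G.Connected) :
    G.numComponents = 1 := by
  have := h.preconnected.subsingleton_connectedComponent
  have := h.nonempty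
  exact Nat.card_unique

lemma reachable_of_forall_adj_reachable {A G : SimpleGraph V}
    (h : ∀ a b, A.Adj a b → G.Reachable a b) {u v : V} (r : A.Reachable u v) :
    G.Reachable u v := by
  obtain ⟨w⟩ := r
  induction w with
  | nil => rfl
  | cons hadj _ ih => exact (h _ _ hadj).trans ih

lemma reachable_fromRel_of_rel {r : V → V → Prop} {a b : V} (h : r a b) :
    (fromRel r).Reachable a b := by
  by_cases hab : a = b
  · rw [hab]
  · exact Adj.reachable ((fromRel_adj ..).2 ⟨hab, Or.inl h⟩)

lemma reachable_sup_edge_iff {G : SimpleGraph V} {x y u v : V} :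
    (G ⊔ edge x y).Reachable u v ↔ G.Reachable u v ∨
      (G.Reachable u x ∧ G.Reachable y v) ∨ (G.Reachable u y ∧ G.Reachable x v) := by
  constructor
  · rintro ⟨w⟩
    induction w with
    | nil => exact Or.inl (Reachable.refl _)
    | @cons a m b h _ ih =>
      rcases h with h | h
      · have r : G.Reachable a m := h.reachable
        rcases ih with q | ⟨q1, q2⟩ | ⟨q1, q2⟩
        · exact Or.inl (r.trans q)
        · exact Or.inr (Or.inl ⟨r.trans q1, q2⟩)
        · exact Or.inr (Or.inr ⟨r.trans q1, q2⟩)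
      · obtain ⟨(⟨rfl, rfl⟩ | ⟨rfl, rfl⟩), -⟩ := (edge_adj ..).1 h
        · rcases ih with q | ⟨q1, q2⟩ | ⟨-, q2⟩
          · exact Or.inr (Or.inl ⟨Reachable.refl _, q⟩)
          · exact Or.inl (q1.symm.trans q2)
          · exact Or.inl q2
        · rcases ih with q | ⟨-, q2⟩ | ⟨q1, q2⟩
          · exact Or.inr (Or.inr ⟨Reachable.refl _, q⟩)
          · exact Or.inl q2
          · exact Or.inl (q1.symm.trans q2)
  · have hle : G ≤ G ⊔ edge x y := le_sup_left
    have hxy : (G ⊔ edge x y).Reachable x y := by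
      by_cases h : x = y
      · rw [h]
      · exact Adj.reachable (Or.inr ((edge_adj ..).2 ⟨Or.inl ⟨rfl, rfl⟩, h⟩))
    rintro (q | ⟨q1, q2⟩ | ⟨q1, q2⟩)
    · exact q.mono hle
    · exact (q1.mono hle).trans (hxy.trans (q2.mono hle))
    · exact (q1.mono hle).trans (hxy.symm.trans (q2.mono hle))

lemma numComponents_sup_edge_of_reachable {G : SimpleGraph V} {x y : V}
    (h : G.Reachable x y) : (G ⊔ edge x y).numComponents = G.numComponents := by
  refine numComponents_congr (funext₂ fun u v => propext ?_)
  rw [reachable_sup_edge_iff]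
  refine ⟨?_, Or.inl⟩
  rintro (q | ⟨q1, q2⟩ | ⟨q1, q2⟩)
  · exact q
  · exact (q1.trans h).trans q2
  · exact (q1.trans h.symm).trans q2

/-- The components of `G ⊔ edge x y` correspond to those of `G` other than the one of `y`. -/
lemma numComponents_sup_edge_of_not_reachable [Finite V] {G : SimpleGraph V} {x y : V}
    (h : ¬ G.Reachable x y) : G.numComponents = (G ⊔ edge x y).numComponents + 1 := by
  set φ := ConnectedComponent.map (Hom.ofLE (le_sup_left : G ≤ G ⊔ edge x y))
  have hφ : Function.Bijective fun c : {c // c ≠ G.connectedComponentMk y} => φ c := by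
    constructor
    · rintro ⟨c, hc⟩ ⟨c', hc'⟩ hcc'
      induction c using ConnectedComponent.ind with | h a => ?_
      induction c' using ConnectedComponent.ind with | h b => ?_
      simp only [φ, ConnectedComponent.map_mk, ConnectedComponent.eq, Hom.coe_ofLE, id,
        reachable_sup_edge_iff] at hcc'
      simp only [ne_eq, ConnectedComponent.eq] at hc hc'
      rcases hcc' with q | ⟨-, q⟩ | ⟨q, -⟩
      · exact Subtype.ext (ConnectedComponent.sound q)
      · exact absurd q.symm hc'
      · exact absurd q hc
    · intro c'
      induction c' using ConnectedComponent.ind with | h w => ?_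
      by_cases hw : G.Reachable w y
      · refine ⟨⟨G.connectedComponentMk x, by simpa using h⟩, ?_⟩
        simp only [φ, ConnectedComponent.map_mk, ConnectedComponent.eq, Hom.coe_ofLE, id,
          reachable_sup_edge_iff]
        exact Or.inr (Or.inl ⟨Reachable.refl _, hw.symm⟩)
      · exact ⟨⟨G.connectedComponentMk w, by simpa using hw⟩, rfl⟩
  classical
  have := Fintype.ofFinite G.ConnectedComponent
  rw [numComponents, numComponents, ← Nat.card_eq_of_bijective _ hφ, Nat.card_eq_fintype_card,
    Nat.card_eq_fintype_card, Fintype.card_subtype_compl, Fintype.card_subtype_eq]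
  have := Fintype.card_pos_iff.2 ⟨G.connectedComponentMk y⟩
  omega

lemma numComponents_le_sup_edge_add_one [Finite V] (G : SimpleGraph V) (x y : V) :
    G.numComponents ≤ (G ⊔ edge x y).numComponents + 1 := by
  by_cases h : G.Reachable x y
  · rw [numComponents_sup_edge_of_reachable h]; omega
  · exact (numComponents_sup_edge_of_not_reachable h).le

lemma fromEdgeSet_insert_eq_sup_edge (x y : V) (s : Set (Sym2 V)) :
    fromEdgeSet (insert s(x, y) s) = fromEdgeSet s ⊔ edge x y := by
  rw [Set.insert_eq, fromEdgeSet_union, sup_comm, edge]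

lemma numComponents_le_sup_fromEdgeSet_add_card [Finite V] (G : SimpleGraph V)
    (B : Finset (Sym2 V)) : G.numComponents ≤ (G ⊔ fromEdgeSet B).numComponents + #B := by
  classical
  induction B using Finset.induction with
  | empty => simp
  | @insert e B he ih =>
    induction e using Sym2.inductionOn with | hf x y => ?_
    rw [coe_insert, fromEdgeSet_insert_eq_sup_edge, ← sup_assoc, card_insert_of_notMem he]
    have := numComponents_le_sup_edge_add_one (G ⊔ fromEdgeSet B) x y
    omega

lemma numComponents_sup_le_of_forall_adj_reachable [Finite V] {C A B : SimpleGraph V}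
    (h : ∀ a b, A.Adj a b → B.Reachable a b) :
    (C ⊔ B).numComponents ≤ (C ⊔ A).numComponents := by
  calc (C ⊔ B).numComponents = (C ⊔ B ⊔ A).numComponents := by
        refine numComponents_congr (funext₂ fun u v => propext
          ⟨fun r => r.mono le_sup_left, reachable_of_forall_adj_reachable ?_⟩)
        rintro a b (hab | hab)
        · exact hab.reachable
        · exact (h a b hab).mono le_sup_right
    _ = (C ⊔ A ⊔ B).numComponents := by rw [sup_right_comm]
    _ ≤ (C ⊔ A).numComponents := numComponents_anti le_sup_left

lemma numComponents_submodular [Finite V] (C A B : SimpleGraph V) :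
    (C ⊔ A).numComponents + (C ⊔ B).numComponents ≤
      C.numComponents + (C ⊔ A ⊔ B).numComponents := by
  classical
  suffices ∀ s : Finset (Sym2 V), (C ⊔ fromEdgeSet s).numComponents + (C ⊔ B).numComponents ≤
      C.numComponents + (C ⊔ fromEdgeSet s ⊔ B).numComponents by
    simpa using this A.edgeSet.toFinite.toFinset
  intro s
  induction s using Finset.induction with
  | empty => simp
  | @insert e s he ih =>
    induction e using Sym2.inductionOn with | hf x y => ?_
    rw [coe_insert, fromEdgeSet_insert_eq_sup_edge, ← sup_assoc, sup_right_comm _ (edge x y) B]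
    -- an edge merging two components of the larger graph also merges two of the smaller one
    by_cases hr : (C ⊔ fromEdgeSet s ⊔ B).Reachable x y
    · rw [numComponents_sup_edge_of_reachable hr]
      have := numComponents_anti (le_sup_left : C ⊔ fromEdgeSet ↑s ≤ _ ⊔ edge x y)
      omega
    · have h1 := numComponents_sup_edge_of_not_reachable hr
      have h2 := numComponents_sup_edge_of_not_reachable fun hc => hr (hc.mono le_sup_left)
      omega

end SimpleGraph

open SimpleGraph

lemma sum_range_mul_ite_lt {t : ℕ → ℝ} {n l : ℕ} (ht : Monotone t) (ht0 : t 0 = 0)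
    (hl : l ≤ n) : ∑ j ∈ range n, (t (j + 1) - t j) * (if t j < t l then 1 else 0) = t l := by
  rw [← sum_subset (range_subset_range.2 hl)]
  · calc ∑ j ∈ range l, (t (j + 1) - t j) * (if t j < t l then 1 else 0)
          = ∑ j ∈ range l, (t (j + 1) - t j) := sum_congr rfl fun j hj => ?_
      _ = t l := by rw [sum_range_sub, ht0, sub_zero]
    have hjl : j + 1 ≤ l := mem_range.1 hj
    split_ifs with h
    · rw [mul_one]
    · have := ht hjl
      have := ht j.le_succ
      rw [mul_zero]; linarith
  · intro j _ hj
    rw [if_neg (not_lt.2 (ht (not_lt.1 (mem_range.not.1 hj)))), mul_zero]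

section Kruskal

variable {Q : Type*}

def thresholdGraph (u : Sym2 Q → ℝ) (r : ℝ) : SimpleGraph Q := fromEdgeSet {e | u e ≤ r}

/-- Layer-cake form of the cost of a Kruskal spanning tree in which the edges of `A` are free,
for thresholds `0 = t 0 ≤ ⋯ ≤ t n` covering the values of `u`. -/
noncomputable def kruskalSum (u : Sym2 Q → ℝ) (t : ℕ → ℝ) (n : ℕ) (A : SimpleGraph Q) : ℝ :=
  ∑ j ∈ range n, (t (j + 1) - t j) * (((thresholdGraph u (t j) ⊔ A).numComponents : ℝ) - 1)

variable (u : Sym2 Q → ℝ) {t : ℕ → ℝ} {n : ℕ}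

lemma thresholdGraph_mono {r r' : ℝ} (h : r ≤ r') : thresholdGraph u r ≤ thresholdGraph u r' :=
  fromEdgeSet_mono fun _ he => le_trans he h

lemma le_of_mem_edgeSet_thresholdGraph {r : ℝ} {e : Sym2 Q}
    (he : e ∈ (thresholdGraph u r).edgeSet) : u e ≤ r := by
  rw [thresholdGraph, edgeSet_fromEdgeSet] at he
  exact he.1

lemma numComponents_thresholdGraph_le [Finite Q] {T : Finset (Sym2 Q)}
    (hT : (fromEdgeSet (T : Set (Sym2 Q))).Connected) (r : ℝ) :
    (thresholdGraph u r).numComponents ≤ #{e ∈ T | r < u e} + 1 := by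
  classical
  have hsplit : fromEdgeSet ↑{e ∈ T | u e ≤ r} ⊔ fromEdgeSet ↑{e ∈ T | r < u e} =
      fromEdgeSet (T : Set (Sym2 Q)) := by
    simp_rw [← not_le]
    rw [← fromEdgeSet_union, ← coe_union, filter_union_filter_not_eq]
  calc (thresholdGraph u r).numComponents ≤ (fromEdgeSet ↑{e ∈ T | u e ≤ r}).numComponents :=
        numComponents_anti (fromEdgeSet_mono fun e he => (mem_filter.1 he).2)
    _ ≤ _ := numComponents_le_sup_fromEdgeSet_add_card _ _
    _ = _ := by rw [hsplit, hT.numComponents_eq_one, add_comm]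

lemma kruskalSum_bot_le [Finite Q] (ht : Monotone t) (ht0 : t 0 = 0)
    (hu : ∀ e, ∃ l ≤ n, t l = u e) {T : Finset (Sym2 Q)}
    (hT : (fromEdgeSet (T : Set (Sym2 Q))).Connected) :
    kruskalSum u t n ⊥ ≤ ∑ e ∈ T, u e := by
  classical
  have hexpand : ∑ e ∈ T, u e = ∑ j ∈ range n, (t (j + 1) - t j) * #{e ∈ T | t j < u e} := by
    calc ∑ e ∈ T, u e
        = ∑ e ∈ T, ∑ j ∈ range n, (t (j + 1) - t j) * (if t j < u e then 1 else 0) :=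
          sum_congr rfl fun e _ => by
            obtain ⟨l, hl, hle⟩ := hu e
            rw [← hle, sum_range_mul_ite_lt ht ht0 hl]
      _ = _ := by
          rw [sum_comm]
          simp_rw [← mul_sum, sum_boole]
  rw [hexpand, kruskalSum]
  refine sum_le_sum fun j _ => mul_le_mul_of_nonneg_left ?_ (sub_nonneg.2 (ht j.le_succ))
  have := numComponents_thresholdGraph_le u hT (t j)
  rw [sup_bot_eq, sub_le_iff_le_add]
  exact_mod_cast this

lemma exists_superset_reachable_eq [Finite Q] (B : SimpleGraph Q) (F : Finset (Sym2 Q))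
    (hF : (F : Set (Sym2 Q)) ⊆ B.edgeSet) :
    ∃ F' : Finset (Sym2 Q), F ⊆ F' ∧ (F' : Set (Sym2 Q)) ⊆ B.edgeSet ∧
      (fromEdgeSet (F' : Set (Sym2 Q))).Reachable = B.Reachable ∧
      #F' + B.numComponents = #F + (fromEdgeSet (F : Set (Sym2 Q))).numComponents := by
  classical
  induction h : (fromEdgeSet (F : Set (Sym2 Q))).numComponents using Nat.strong_induction_on
    generalizing F with | _ m ih => ?_
  have hFB : fromEdgeSet (F : Set (Sym2 Q)) ≤ B := by simpa using fromEdgeSet_mono hF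
  by_cases hreach : ∀ a b, B.Reachable a b → (fromEdgeSet (F : Set (Sym2 Q))).Reachable a b
  · have heq : (fromEdgeSet (F : Set (Sym2 Q))).Reachable = B.Reachable :=
      funext₂ fun a b => propext ⟨fun r => r.mono hFB, hreach a b⟩
    exact ⟨F, subset_rfl, hF, heq, by rw [← h, numComponents_congr heq]⟩
  push Not at hreach
  obtain ⟨a, b, hab, hnab⟩ := hreach
  obtain ⟨p, q, hpq, hnpq⟩ :
      ∃ p q, B.Adj p q ∧ ¬ (fromEdgeSet (F : Set (Sym2 Q))).Reachable p q := by
    by_contra! hall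
    exact hnab (reachable_of_forall_adj_reachable hall hab)
  have hnotmem : s(p, q) ∉ F := fun hmem =>
    hnpq (Adj.reachable ((fromEdgeSet_adj _).2 ⟨hmem, hpq.ne⟩))
  have hgraph : fromEdgeSet ↑(insert s(p, q) F) = fromEdgeSet ↑F ⊔ edge p q := by
    rw [coe_insert, fromEdgeSet_insert_eq_sup_edge]
  have hdrop := numComponents_sup_edge_of_not_reachable hnpq
  obtain ⟨F', hsub, hF'B, hreach', hcard⟩ :=
    ih (fromEdgeSet ↑F ⊔ edge p q).numComponents (by omega) (insert s(p, q) F)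
    (by simpa [Set.insert_subset_iff] using ⟨hpq, hF⟩) (by rw [hgraph])
  refine ⟨F', (subset_insert _ _).trans hsub, hF'B, hreach', ?_⟩
  rw [card_insert_of_notMem hnotmem] at hcard
  omega

/-- The forest built by Kruskal's algorithm up to threshold `t j`: each layer adds
`c_j - c_{j+1}` edges of cost at most `t (j+1)`, where `c_j` counts the components below `t j`. -/
lemma exists_kruskal_forest [Finite Q] (ht : Monotone t) (ht0 : t 0 = 0) (j : ℕ) :
    ∃ F : Finset (Sym2 Q), (F : Set (Sym2 Q)) ⊆ (thresholdGraph u (t j)).edgeSet ∧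
      (fromEdgeSet (F : Set (Sym2 Q))).Reachable = (thresholdGraph u (t j)).Reachable ∧
      #F + (thresholdGraph u (t j)).numComponents = Nat.card Q ∧
      ∑ e ∈ F, u e ≤
        kruskalSum u t j ⊥ - t j * ((thresholdGraph u (t j)).numComponents - 1) := by
  classical
  induction j with
  | zero =>
    obtain ⟨F, -, hFsub, hFreach, hFcard⟩ :=
      exists_superset_reachable_eq (thresholdGraph u (t 0)) ∅ (by simp)
    refine ⟨F, hFsub, hFreach, by simpa [numComponents_bot] using hFcard, ?_⟩
    simp only [kruskalSum, range_zero, sum_empty, ht0, zero_mul, sub_zero]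
    exact sum_nonpos fun e he => ht0 ▸ le_of_mem_edgeSet_thresholdGraph u (hFsub he)
  | succ j ih =>
    obtain ⟨F, hFsub, hFreach, hFcard, hFsum⟩ := ih
    have hmono := thresholdGraph_mono u (ht j.le_succ)
    obtain ⟨F', hFF', hF'sub, hF'reach, hF'card⟩ := exists_superset_reachable_eq
      (thresholdGraph u (t (j + 1))) F fun e he => edgeSet_mono hmono (hFsub he)
    rw [numComponents_congr hFreach] at hF'card
    refine ⟨F', hF'sub, hF'reach, by omega, ?_⟩
    have hnew : ∑ e ∈ F' \ F, u e ≤ #(F' \ F) * t (j + 1) := by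
      rw [← nsmul_eq_mul]
      exact sum_le_card_nsmul _ _ _ fun e he =>
        le_of_mem_edgeSet_thresholdGraph u (hF'sub (mem_sdiff.1 he).1)
    have hcard : (#(F' \ F) : ℝ) = (thresholdGraph u (t j)).numComponents -
        (thresholdGraph u (t (j + 1))).numComponents := by
      have := card_sdiff_add_card_eq_card hFF'
      rw [eq_sub_iff_add_eq]
      exact_mod_cast (by omega)
    rw [hcard] at hnew
    rw [← sum_sdiff hFF', kruskalSum, sum_range_succ, ← kruskalSum, sup_bot_eq]
    linarith

lemma exists_spanning_tree_sum_le_kruskalSum [Finite Q] [Nonempty Q] (ht : Monotone t)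
    (ht0 : t 0 = 0) (hu : ∀ e, ∃ l ≤ n, t l = u e) :
    ∃ T : Finset (Sym2 Q), (∀ e ∈ T, ¬ e.IsDiag) ∧ (fromEdgeSet (T : Set (Sym2 Q))).Connected ∧
      #T + 1 = Nat.card Q ∧ ∑ e ∈ T, u e ≤ kruskalSum u t n ⊥ := by
  obtain ⟨F, hFsub, hFreach, hFcard, hFsum⟩ := exists_kruskal_forest u ht ht0 n
  have htop : thresholdGraph u (t n) = ⊤ := by
    refine eq_top_iff.2 fun a b hab => (fromEdgeSet_adj _).2 ⟨?_, hab⟩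
    obtain ⟨l, hl, hle⟩ := hu s(a, b)
    exact (hle ▸ ht hl : u s(a, b) ≤ t n)
  rw [htop, connected_top.numComponents_eq_one] at hFcard hFsum
  rw [htop] at hFsub hFreach
  refine ⟨F, fun e he => not_isDiag_of_mem_edgeSet _ (hFsub he), ?_, hFcard, by simpa using hFsum⟩
  exact (connected_iff _).2 ⟨fun a b => hFreach ▸ connected_top.preconnected a b, inferInstance⟩

theorem mstCost_eq_kruskalSum [Finite Q] [Nonempty Q] (ht : Monotone t) (ht0 : t 0 = 0)
    (hu : ∀ e, ∃ l ≤ n, t l = u e) : mstCost u = kruskalSum u t n ⊥ := by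
  obtain ⟨T, hdiag, hconn, hcard, hsum⟩ := exists_spanning_tree_sum_le_kruskalSum u ht ht0 hu
  have hlow : kruskalSum u t n ⊥ ∈ lowerBounds {w : ℝ | ∃ T : Finset (Sym2 Q),
      (∀ e ∈ T, ¬ e.IsDiag) ∧ (fromEdgeSet (T : Set (Sym2 Q))).Connected ∧
      #T + 1 = Nat.card Q ∧ w = ∑ e ∈ T, u e} := by
    rintro w ⟨T', -, hT', -, rfl⟩
    exact kruskalSum_bot_le u ht ht0 hu hT'
  exact le_antisymm ((csInf_le ⟨_, hlow⟩ ⟨T, hdiag, hconn, hcard, rfl⟩).trans hsum)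
    (le_csInf ⟨_, T, hdiag, hconn, hcard, rfl⟩ hlow)

end Kruskal

lemma exists_monotone_enumeration (S : Finset ℝ) (h0 : 0 ∈ S) (hS : ∀ s ∈ S, 0 ≤ s) :
    ∃ (t : ℕ → ℝ) (n : ℕ), Monotone t ∧ t 0 = 0 ∧ ∀ s ∈ S, ∃ l ≤ n, t l = s := by
  have hm : 0 < #S := card_pos.2 ⟨0, h0⟩
  set f := S.orderEmbOfFin rfl
  refine ⟨fun j => f ⟨min j (#S - 1), by omega⟩, #S - 1, fun i j hij => f.monotone ?_, ?_, ?_⟩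
  · simp only [Fin.mk_le_mk]; omega
  · obtain ⟨l, hl⟩ := (Set.ext_iff.1 (range_orderEmbOfFin S rfl) 0).2 h0
    refine le_antisymm (hl ▸ f.monotone ?_) (hS _ (orderEmbOfFin_mem S rfl _))
    simp only [Fin.le_def]
    omega
  · intro s hs
    obtain ⟨⟨l, hl⟩, rfl⟩ := (Set.ext_iff.1 (range_orderEmbOfFin S rfl) s).2 hs
    exact ⟨l, by omega, by simp only [f]; congr; omega⟩

section Contraction

variable {P : Type*} [Finite P] (d : Sym2 P → ℝ) (σ : Setoid P)

lemma finite_quotCost_candidates (e : Sym2 (Quotient σ)) :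
    {v : ℝ | ∃ a b : P, s(Quotient.mk σ a, Quotient.mk σ b) = e ∧ v = d s(a, b)}.Finite :=
  (Set.finite_range fun p : P × P => d s(p.1, p.2)).subset <| by
    rintro v ⟨a, b, -, rfl⟩
    exact ⟨(a, b), rfl⟩

lemma exists_quotCost_eq (q m : Quotient σ) :
    ∃ a b : P, Quotient.mk σ a = q ∧ Quotient.mk σ b = m ∧ quotCost d σ s(q, m) = d s(a, b) := by
  have hne : {v : ℝ | ∃ a b : P,
      s(Quotient.mk σ a, Quotient.mk σ b) = s(q, m) ∧ v = d s(a, b)}.Nonempty := by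
    obtain ⟨a, rfl⟩ := Quotient.exists_rep q
    obtain ⟨b, rfl⟩ := Quotient.exists_rep m
    exact ⟨_, a, b, rfl, rfl⟩
  obtain ⟨a, b, hab, hv⟩ := hne.csInf_mem (finite_quotCost_candidates d σ _)
  rcases Sym2.eq_iff.1 hab with ⟨ha, hb⟩ | ⟨ha, hb⟩
  · exact ⟨a, b, ha, hb, hv⟩
  · refine ⟨b, a, hb, ha, ?_⟩
    rw [Sym2.eq_swap (a := b)]
    exact hv

lemma quotCost_mk_le (a b : P) :
    quotCost d σ s(Quotient.mk σ a, Quotient.mk σ b) ≤ d s(a, b) :=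
  csInf_le (finite_quotCost_candidates d σ _).bddBelow ⟨a, b, rfl, rfl⟩

lemma reachable_thresholdGraph_quotCost_iff {r : ℝ} {a b : P} :
    (thresholdGraph (quotCost d σ) r).Reachable (Quotient.mk σ a) (Quotient.mk σ b) ↔
      (thresholdGraph d r ⊔ fromRel σ).Reachable a b := by
  constructor
  · suffices ∀ q m (w : (thresholdGraph (quotCost d σ) r).Walk q m) (a b : P),
        Quotient.mk σ a = q → Quotient.mk σ b = m →
          (thresholdGraph d r ⊔ fromRel σ).Reachable a b from
      fun ⟨w⟩ => this _ _ w a b rfl rfl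
    intro q m w
    induction w with
    | nil =>
      rintro a b ha rfl
      exact (reachable_fromRel_of_rel (Quotient.exact ha)).mono le_sup_right
    | @cons q m m' hadj _ ih =>
      rintro a b rfl hb
      obtain ⟨hle, hne⟩ := (fromEdgeSet_adj _).1 hadj
      obtain ⟨a', b', ha', rfl, hv⟩ := exists_quotCost_eq d σ (Quotient.mk σ a) m
      have had : (thresholdGraph d r ⊔ fromRel σ).Adj a' b' :=
        Or.inl ((fromEdgeSet_adj _).2 ⟨show d s(a', b') ≤ r from hv ▸ hle, fun h => hne (by rw [← ha', h])⟩)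
      exact ((reachable_fromRel_of_rel (Quotient.exact ha'.symm)).mono le_sup_right).trans
        (had.reachable.trans (ih b' b rfl hb))
  · rintro ⟨w⟩
    induction w with
    | nil => rfl
    | @cons a m b hadj _ ih =>
      refine Reachable.trans ?_ ih
      rcases hadj with hadj | hadj
      · by_cases hq : Quotient.mk σ a = Quotient.mk σ m
        · rw [hq]
        · exact Adj.reachable ((fromEdgeSet_adj _).2
            ⟨(quotCost_mk_le d σ a m).trans ((fromEdgeSet_adj _).1 hadj).1, hq⟩)
      · obtain ⟨-, h | h⟩ := (fromRel_adj ..).1 hadj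
        · rw [Quotient.sound h]
        · rw [Quotient.sound h]

lemma numComponents_thresholdGraph_quotCost (r : ℝ) :
    (thresholdGraph (quotCost d σ) r).numComponents =
      (thresholdGraph d r ⊔ fromRel σ).numComponents := by
  refine (Nat.card_eq_of_bijective (ConnectedComponent.lift
    (fun v => (thresholdGraph (quotCost d σ) r).connectedComponentMk (Quotient.mk σ v))
    fun _ _ p _ => ConnectedComponent.sound
      ((reachable_thresholdGraph_quotCost_iff d σ).2 p.reachable)) ⟨?_, ?_⟩).symm
  · intro c c'
    induction c, c' using ConnectedComponent.ind₂ with | h a b => ?_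
    simpa using (reachable_thresholdGraph_quotCost_iff d σ).1
  · intro c
    induction c using ConnectedComponent.ind with | h q => ?_
    obtain ⟨a, rfl⟩ := Quotient.exists_rep q
    exact ⟨(thresholdGraph d r ⊔ fromRel σ).connectedComponentMk a, rfl⟩

theorem mstCost_quotCost_eq_kruskalSum [Nonempty P] {t : ℕ → ℝ} {n : ℕ} (ht : Monotone t)
    (ht0 : t 0 = 0) (hd : ∀ e, ∃ l ≤ n, t l = d e) :
    mstCost (quotCost d σ) = kruskalSum d t n (fromRel σ) := by
  have hq : ∀ e, ∃ l ≤ n, t l = quotCost d σ e := by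
    intro e
    induction e using Sym2.inductionOn with | hf q m => ?_
    obtain ⟨a, b, -, -, h⟩ := exists_quotCost_eq d σ q m
    exact h ▸ hd _
  have : Nonempty (Quotient σ) := .map (Quotient.mk σ) ‹_›
  rw [mstCost_eq_kruskalSum _ ht ht0 hq, kruskalSum, kruskalSum]
  simp only [sup_bot_eq, numComponents_thresholdGraph_quotCost]

end Contraction

section Drop

variable {P : Type*} [Finite P] (d : Sym2 P → ℝ) {t : ℕ → ℝ} {n : ℕ}

lemma kruskalSum_anti (ht : Monotone t) {A B : SimpleGraph P}
    (h : ∀ a b, A.Adj a b → B.Reachable a b) : kruskalSum d t n B ≤ kruskalSum d t n A := by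
  refine sum_le_sum fun j _ => mul_le_mul_of_nonneg_left ?_ (sub_nonneg.2 (ht j.le_succ))
  have := numComponents_sup_le_of_forall_adj_reachable (C := thresholdGraph d (t j)) h
  gcongr

lemma kruskalSum_add_kruskalSum_le (ht : Monotone t) (A B : SimpleGraph P) :
    kruskalSum d t n A + kruskalSum d t n B ≤ kruskalSum d t n ⊥ + kruskalSum d t n (A ⊔ B) := by
  simp only [kruskalSum, ← sum_add_distrib, sup_bot_eq, ← mul_add]
  refine sum_le_sum fun j _ => mul_le_mul_of_nonneg_left ?_ (sub_nonneg.2 (ht j.le_succ))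
  have := numComponents_submodular (thresholdGraph d (t j)) A B
  rw [sup_assoc] at this
  have := (Nat.cast_le (α := ℝ)).2 this
  push_cast at this
  linarith

lemma kruskalSum_bot_sub_sup_le (ht : Monotone t) {ι : Type*} (s : Finset ι)
    (A : ι → SimpleGraph P) :
    kruskalSum d t n ⊥ - kruskalSum d t n (s.sup A) ≤
      ∑ i ∈ s, (kruskalSum d t n ⊥ - kruskalSum d t n (A i)) := by
  classical
  induction s using Finset.induction with
  | empty => simp
  | @insert i s hi ih =>
    rw [sup_insert, sum_insert hi]
    linarith [kruskalSum_add_kruskalSum_le (n := n) d ht (A i) (s.sup A)]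

lemma dropCost_eq_kruskalSum_sub [Nonempty P] (ht : Monotone t) (ht0 : t 0 = 0)
    (hd : ∀ e, ∃ l ≤ n, t l = d e) (X : Set P) :
    dropCost d X = kruskalSum d t n ⊥ - kruskalSum d t n (fromRel (contractSetoid X)) := by
  rw [dropCost, mstCost_eq_kruskalSum d ht ht0 hd, mstCost_quotCost_eq_kruskalSum d _ ht ht0 hd]

theorem dropCost_le_sum_dropCost [Nonempty P] {ι : Type*} [Fintype ι] (hd : ∀ e, 0 ≤ d e)
    (X : Set P) (Xi : ι → Set P)
    (hX : ∀ x ∈ X, ∀ y ∈ X, Relation.EqvGen (fun a b => ∃ i, a ∈ Xi i ∧ b ∈ Xi i) x y) :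
    dropCost d X ≤ ∑ i, dropCost d (Xi i) := by
  classical
  have := Fintype.ofFinite P
  obtain ⟨t, n, ht, ht0, hS⟩ := exists_monotone_enumeration (insert 0 (univ.image d))
    (mem_insert_self _ _) (by simpa using hd)
  have hu : ∀ e, ∃ l ≤ n, t l = d e :=
    fun e => hS _ (mem_insert_of_mem (mem_image_of_mem _ (mem_univ e)))
  set A : ι → SimpleGraph P := fun i => fromRel (contractSetoid (Xi i))
  have hgen : ∀ a b, Relation.EqvGen (fun a b => ∃ i, a ∈ Xi i ∧ b ∈ Xi i) a b →
      (univ.sup A).Reachable a b := by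
    intro a b h
    induction h with
    | rel x y hxy =>
      obtain ⟨i, hx, hy⟩ := hxy
      exact (reachable_fromRel_of_rel (r := contractSetoid (Xi i)) (Or.inr ⟨hx, hy⟩)).mono (le_sup (f := A) (mem_univ i))
    | refl => rfl
    | symm _ _ _ ih => exact ih.symm
    | trans _ _ _ _ _ ih ih' => exact ih.trans ih'
  have hX' : ∀ a b, (fromRel (contractSetoid X)).Adj a b → (univ.sup A).Reachable a b := by
    rintro a b ⟨hab, (rfl | ⟨ha, hb⟩) | (rfl | ⟨hb, ha⟩)⟩
    all_goals first | exact absurd rfl hab | exact hgen a b (hX a ha b hb)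
  simp only [dropCost_eq_kruskalSum_sub d ht ht0 hu]
  calc _ ≤ kruskalSum d t n ⊥ - kruskalSum d t n (univ.sup A) :=
        sub_le_sub_left (kruskalSum_anti d ht hX') _
    _ ≤ _ := kruskalSum_bot_sub_sup_le d ht univ A

end Drop

lemma restrictDist_nonneg {V : Type*} {G : SimpleGraph V} {c : Sym2 V → ℝ}
    (hc : ∀ e ∈ G.edgeSet, 0 < c e) (R : Finset V) (e : Sym2 {v : V // v ∈ R}) :
    0 ≤ restrictDist G c R e := by
  induction e using Sym2.inductionOn with | hf a b => ?_
  refine Real.sInf_nonneg ?_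
  rintro x (⟨p, rfl⟩ | ⟨p, rfl⟩) <;>
  · refine List.sum_nonneg fun y hy => ?_
    obtain ⟨e, he, rfl⟩ := List.mem_map.1 hy
    exact (hc e (p.edges_subset_edgeSet he)).le

theorem improving_component_has_full_improving_general {V : Type*} [DecidableEq V]
    (G : SimpleGraph V)
    (c : Sym2 V → ℝ) (hc : ∀ e ∈ G.edgeSet, 0 < c e)
    (R : Finset V) (hR : R.Nonempty)
    (X : Set {v : V // v ∈ R})
    (K : Finset (Sym2 V))
    (himp : ∑ e ∈ K, c e < dropCost (restrictDist G c R) X)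
    (k : ℕ) (Ki : Fin k → Finset (Sym2 V)) (Xi : Fin k → Set {v : V // v ∈ R})
    (hdisj : ∀ i j : Fin k, i ≠ j → Disjoint (Ki i) (Ki j))
    (hcover : K = Finset.univ.biUnion Ki)
    (hgen : ∀ x ∈ X, ∀ y ∈ X,
      Relation.EqvGen (fun a b => ∃ i : Fin k, a ∈ Xi i ∧ b ∈ Xi i) x y) :
    ∃ i : Fin k, ∑ e ∈ Ki i, c e < dropCost (restrictDist G c R) (Xi i) := by
  by_contra! hcon
  have : Nonempty R := hR.to_subtype
  have hsplit : ∑ e ∈ K, c e = ∑ i, ∑ e ∈ Ki i, c e := by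
    rw [hcover, sum_biUnion fun i _ j _ hij => hdisj i j hij]
  have hdrop := dropCost_le_sum_dropCost _ (restrictDist_nonneg hc R) X Xi hgen
  linarith [sum_le_sum fun i (_ : i ∈ univ) => hcon i]

/-- Every improving component contains a full improving component:
if `K` is a component connecting the terminal set `X` with `c(K) < drop_G(X)`, and
`K` decomposes into (maximal) full components `K_1, …, K_k` connecting terminal sets
`X_1, …, X_k` (pairwise disjoint edge sets covering `K`, with `X` connected through the
equivalence generated by the `X_i`), then some `K_i` satisfies `c(K_i) < drop_G(X_i)`. -/
theorem improving_component_has_full_improving {V : Type*} [Fintype V] [DecidableEq V]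
    (G : SimpleGraph V) (hG : G.Connected)
    (c : Sym2 V → ℝ) (hc : ∀ e ∈ G.edgeSet, 0 < c e)
    (R : Finset V) (hR : R.Nonempty)
    (X : Set {v : V // v ∈ R})
    (K : Finset (Sym2 V)) (hKE : (↑K : Set (Sym2 V)) ⊆ G.edgeSet)
    (hKconn : ConnectsSet (↑K : Set (Sym2 V)) (Subtype.val '' X))
    (himp : ∑ e ∈ K, c e < dropCost (restrictDist G c R) X)
    (k : ℕ) (Ki : Fin k → Finset (Sym2 V)) (Xi : Fin k → Set {v : V // v ∈ R})
    (hdisj : ∀ i j : Fin k, i ≠ j → Disjoint (Ki i) (Ki j))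
    (hcover : K = Finset.univ.biUnion Ki)
    (hfull : ∀ i : Fin k, IsFullComponent G R (Ki i))
    (hXi : ∀ i : Fin k, Xi i = {x : {v : V // v ∈ R} | ∃ e ∈ Ki i, (x : V) ∈ e})
    (hgen : ∀ x ∈ X, ∀ y ∈ X,
      Relation.EqvGen (fun a b => ∃ i : Fin k, a ∈ Xi i ∧ b ∈ Xi i) x y) :
    ∃ i : Fin k, ∑ e ∈ Ki i, c e < dropCost (restrictDist G c R) (Xi i) :=
  improving_component_has_full_improving_general G c hc R hR X K himp k Ki Xi hdisj hcover hgen
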